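/- The graded ℤ-module T_• equipped with the cosymmetrized coproduct δ̂ is a graded coassociative cocommutative counital coalgebra: (δ̂ ⊗ id) ∘ δ̂ = (id ⊗ δ̂) ∘ δ̂, composing δ̂ with the twist map x ⊗ y ↦ y ⊗ x gives back δ̂, and the projection onto T_0 ≅ ℤ is a counit for δ̂. -/
import Mathlib


set_option linter.unreachableTactic false
set_option linter.unusedTactic false
set_option maxHeartbeats 1000000


open Finset

/-- Candidate set compositions: lists of finite sets of positive naturals. -/
abbrev SC : Type := List (Finset ℕ)

/-- The underlying (ground) set of a list of blocks. -/
def ground (L : SC) : Finset ℕ := L.foldr (· ∪ ·) ∅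

/-- `L` is a set composition of `[n] = {1,…,n}`. -/
def IsSetComp (n : ℕ) (L : SC) : Prop :=
  (∀ B ∈ L, B.Nonempty) ∧ L.Pairwise Disjoint ∧ ground L = Finset.Icc 1 n

/-- The degree of a set composition (largest element of its ground set). -/
def maxG (L : SC) : ℕ := (ground L).sup id

/-- The 1-based rank of `x` inside the finite set `A` (the position of `x` in the
increasing enumeration of `A`, when `x ∈ A`); this is the order preserving
relabelling `A → [|A|]`. -/
def rankIn (A : Finset ℕ) (x : ℕ) : ℕ := (A.filter (· ≤ x)).card

/-- `P|_A` : intersect the blocks with `A`, delete the empty intersections, and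
relabel along the order preserving bijection `A → [|A|]`. -/
def restrictSC (A : Finset ℕ) (L : SC) : SC :=
  (L.map fun B => (B ∩ A).image (rankIn A)).filter fun B => decide B.Nonempty

/-- Shift all entries of all blocks by `p`. -/
def shiftSC (p : ℕ) (L : SC) : SC := L.map (Finset.image (· + p))

/-- The restricted product `∗̄` on set compositions:
`P ∗̄ Q = (P₁,…,P_k, p+Q₁,…,p+Q_l)` for `P ∈ Comp_p`. -/
def barMul (P Q : SC) : SC := P ++ shiftSC (maxG P) Q

/-- The order-preserving relabelling map `S → T` (`is_{S,T}`), for finite sets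
of equal cardinality. -/
def relabelFun (S T : Finset ℕ) (x : ℕ) : ℕ := (T.sort (· ≤ ·)).getD (rankIn S x - 1) 0

/-- Relabel a set composition of `S` along the order-preserving bijection `S → T`. -/
def relabelSC (S T : Finset ℕ) (L : SC) : SC := L.map (Finset.image (relabelFun S T))

variable (R : Type) [CommRing R]

/-- The free module with basis indexed by lists of blocks; the twisted descent
algebra `T_•` is its submodule spanned by the set compositions. -/
abbrev FM := SC →₀ R

/-- `T_•` as a submodule: the span of the set compositions. -/
noncomputable def Tspan : Submodule R (FM R) :=
  Submodule.span R {f : FM R | ∃ n P, IsSetComp n P ∧ f = Finsupp.single P 1}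

/-- The restricted product `∗̄` as a bilinear map. -/
noncomputable def barL : FM R →ₗ[R] FM R →ₗ[R] FM R :=
  Finsupp.lift _ R SC fun P => Finsupp.lift _ R SC fun Q => Finsupp.single (barMul P Q) 1

/-- The symmetrized product `∗̂` on basis elements:
`P ∗̂ Q = Σ is_{[p],A}(P) ∗ is_{[q],B}(Q)` over all `A ⊔ B = [p+q]`, `|A| = p`. -/
noncomputable def hatB (P Q : SC) : FM R :=
  ∑ A ∈ (Finset.Icc 1 (maxG P + maxG Q)).powerset.filter (fun A => A.card = maxG P),
    Finsupp.single
      (relabelSC (Finset.Icc 1 (maxG P)) A P ++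
        relabelSC (Finset.Icc 1 (maxG Q)) ((Finset.Icc 1 (maxG P + maxG Q)) \ A) Q) 1

/-- The symmetrized product `∗̂` as a bilinear map. -/
noncomputable def hatL : FM R →ₗ[R] FM R →ₗ[R] FM R :=
  Finsupp.lift _ R SC fun P => Finsupp.lift _ R SC fun Q => hatB R P Q

/-- `T_• ⊗ T_•`, realized as the free module on pairs of basis elements. -/
abbrev FM2 := (SC × SC) →₀ R

/-- `T_• ⊗ T_• ⊗ T_•`, realized as the free module on triples of basis elements. -/
abbrev FM3 := (SC × SC × SC) →₀ R

/-- The restricted coproduct `δ̄ (P) = Σ_{p=0}^n P|_{[p]} ⊗ P|_{{p+1,…,n}}`. -/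
noncomputable def dBarL : FM R →ₗ[R] FM2 R :=
  Finsupp.lift _ R SC fun P =>
    ∑ p ∈ Finset.range (maxG P + 1),
      Finsupp.single
        (restrictSC (Finset.Icc 1 p) P, restrictSC (Finset.Icc (p+1) (maxG P)) P) 1

/-- The cosymmetrized coproduct `δ̂ (P) = Σ_{A ⊔ B = [n]} P|_A ⊗ P|_B`. -/
noncomputable def dHatL : FM R →ₗ[R] FM2 R :=
  Finsupp.lift _ R SC fun P =>
    ∑ A ∈ (Finset.Icc 1 (maxG P)).powerset,
      Finsupp.single (restrictSC A P, restrictSC ((Finset.Icc 1 (maxG P)) \ A) P) 1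

/-- Apply a coproduct to the first tensor factor:  `d ⊗ id : T⊗T → T⊗T⊗T`. -/
noncomputable def applyFst (d : FM R →ₗ[R] FM2 R) : FM2 R →ₗ[R] FM3 R :=
  Finsupp.lift _ R (SC × SC) fun PQ =>
    Finsupp.mapDomain (fun RS : SC × SC => (RS.1, RS.2, PQ.2)) (d (Finsupp.single PQ.1 1))

/-- Apply a coproduct to the second tensor factor:  `id ⊗ d : T⊗T → T⊗T⊗T`. -/
noncomputable def applySnd (d : FM R →ₗ[R] FM2 R) : FM2 R →ₗ[R] FM3 R :=
  Finsupp.lift _ R (SC × SC) fun PQ =>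
    Finsupp.mapDomain (fun RS : SC × SC => (PQ.1, RS.1, RS.2)) (d (Finsupp.single PQ.2 1))

/-- `ε ⊗ id : T⊗T → T`, where `ε` is the projection onto `T_0 ≅ R`
(the coefficient of the empty set composition). -/
noncomputable def epsFst : FM2 R →ₗ[R] FM R :=
  Finsupp.lift _ R (SC × SC) fun PQ =>
    if PQ.1 = ([] : SC) then Finsupp.single PQ.2 1 else 0

/-- `id ⊗ ε : T⊗T → T`. -/
noncomputable def epsSnd : FM2 R →ₗ[R] FM R :=
  Finsupp.lift _ R (SC × SC) fun PQ =>
    if PQ.2 = ([] : SC) then Finsupp.single PQ.1 1 else 0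

/-- The twist map `x ⊗ y ↦ y ⊗ x` on `T_• ⊗ T_•`. -/
noncomputable def twistL : FM2 R →ₗ[R] FM2 R :=
  Finsupp.lift _ R (SC × SC) fun PQ => Finsupp.single (PQ.2, PQ.1) 1

/-- The counit: projection onto the degree-0 component `T_0 ≅ R`. -/
noncomputable def counitL : FM R →ₗ[R] R :=
  Finsupp.lift _ R SC fun P => if P = ([] : SC) then 1 else 0


lemma rankIn_pos {A : Finset ℕ} {x : ℕ} (hx : x ∈ A) : 1 ≤ rankIn A x :=
  Finset.card_pos.mpr ⟨x, Finset.mem_filter.mpr ⟨hx, le_refl x⟩⟩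

lemma rankIn_le_card (A : Finset ℕ) (x : ℕ) : rankIn A x ≤ A.card :=
  Finset.card_filter_le _ _

lemma rankIn_mono (A : Finset ℕ) {x y : ℕ} (h : x ≤ y) : rankIn A x ≤ rankIn A y := by
  apply Finset.card_le_card
  intro a ha
  rw [Finset.mem_filter] at *
  exact ⟨ha.1, le_trans ha.2 h⟩

lemma rankIn_strict {A : Finset ℕ} {x y : ℕ} (hy : y ∈ A) (h : x < y) :
    rankIn A x < rankIn A y := by
  apply Finset.card_lt_card
  constructor
  · intro a ha
    rw [Finset.mem_filter] at *
    exact ⟨ha.1, le_trans ha.2 h.le⟩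
  · intro hsub
    have := hsub (Finset.mem_filter.mpr ⟨hy, le_refl y⟩)
    exact absurd (Finset.mem_filter.mp this).2 (not_le.mpr h)

lemma rankIn_injOn {A : Finset ℕ} {x y : ℕ} (hx : x ∈ A) (hy : y ∈ A)
    (h : rankIn A x = rankIn A y) : x = y := by
  rcases lt_trichotomy x y with h' | h' | h'
  · exact absurd h (rankIn_strict hy h').ne
  · exact h'
  · exact absurd h.symm (rankIn_strict hx h').ne

lemma rankIn_le_iff {A : Finset ℕ} {x y : ℕ} (hx : x ∈ A) (hy : y ∈ A) :
    rankIn A x ≤ rankIn A y ↔ x ≤ y := by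
  constructor
  · intro h; by_contra h'
    exact absurd h (not_le.mpr (rankIn_strict hx (not_le.mp h')))
  · exact rankIn_mono A

lemma image_rankIn (A : Finset ℕ) : A.image (rankIn A) = Finset.Icc 1 A.card := by
  apply Finset.eq_of_subset_of_card_le
  · intro c hc
    rcases Finset.mem_image.mp hc with ⟨x, hx, rfl⟩
    exact Finset.mem_Icc.mpr ⟨rankIn_pos hx, rankIn_le_card A x⟩
  · rw [Nat.card_Icc]
    have : (A.image (rankIn A)).card = A.card :=
      Finset.card_image_of_injOn fun x hx y hy h => rankIn_injOn hx hy h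
    omega

lemma rankIn_comp {A C : Finset ℕ} (hC : C ⊆ Finset.Icc 1 A.card) {x : ℕ}
    (hxA : x ∈ A) :
    rankIn C (rankIn A x) = rankIn (A.filter fun a => rankIn A a ∈ C) x := by
  have himg : ((A.filter fun a => rankIn A a ∈ C).filter (· ≤ x)).image (rankIn A)
      = C.filter (· ≤ rankIn A x) := by
    ext c
    simp only [Finset.mem_image, Finset.mem_filter]
    constructor
    · rintro ⟨a, ⟨⟨haA, haC⟩, hax⟩, rfl⟩
      exact ⟨haC, rankIn_mono A hax⟩
    · rintro ⟨hcC, hcle⟩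
      have : c ∈ A.image (rankIn A) := by rw [image_rankIn]; exact hC hcC
      rcases Finset.mem_image.mp this with ⟨a, haA, rfl⟩
      exact ⟨a, ⟨⟨haA, hcC⟩, (rankIn_le_iff haA hxA).mp hcle⟩, rfl⟩
  have hinj : Set.InjOn (rankIn A)
      ((A.filter fun a => rankIn A a ∈ C).filter (· ≤ x) : Finset ℕ) := by
    intro a ha b hb h
    exact rankIn_injOn (Finset.mem_filter.mp (Finset.mem_filter.mp ha).1).1
      (Finset.mem_filter.mp (Finset.mem_filter.mp hb).1).1 h
  have hcard := Finset.card_image_of_injOn hinj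
  rw [himg] at hcard
  show (C.filter (· ≤ rankIn A x)).card = _
  exact hcard

lemma ground_cons (B : Finset ℕ) (L : SC) : ground (B :: L) = B ∪ ground L := rfl

lemma mem_ground {L : SC} {x : ℕ} : x ∈ ground L ↔ ∃ B ∈ L, x ∈ B := by
  induction L with
  | nil => simp [ground]
  | cons B L ih => simp [ground_cons, ih, Finset.mem_union]

lemma subset_ground {L : SC} {B : Finset ℕ} (h : B ∈ L) : B ⊆ ground L :=
  fun x hx => mem_ground.mpr ⟨B, h, hx⟩

lemma restrictSC_nil (A : Finset ℕ) : restrictSC A [] = [] := rfl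

lemma restrictSC_cons (A B : Finset ℕ) (L : SC) : restrictSC A (B :: L) =
    if ((B ∩ A).image (rankIn A)).Nonempty then
      ((B ∩ A).image (rankIn A)) :: restrictSC A L
    else restrictSC A L := by
  simp only [restrictSC, List.map_cons, List.filter_cons, decide_eq_true_eq]

lemma restrictSC_restrictSC {A C : Finset ℕ} (hC : C ⊆ Finset.Icc 1 A.card) (L : SC) :
    restrictSC C (restrictSC A L) = restrictSC (A.filter fun a => rankIn A a ∈ C) L := by
  induction L with
  | nil => rfl
  | cons B L ih =>
    have hhead : (((B ∩ A).image (rankIn A)) ∩ C).image (rankIn C)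
        = (B ∩ (A.filter fun a => rankIn A a ∈ C)).image
            (rankIn (A.filter fun a => rankIn A a ∈ C)) := by
      ext y
      simp only [Finset.mem_image, Finset.mem_inter, Finset.mem_filter]
      constructor
      · rintro ⟨c, ⟨⟨a, ⟨haB, haA⟩, rfl⟩, hcC⟩, rfl⟩
        exact ⟨a, ⟨haB, haA, hcC⟩, (rankIn_comp hC haA).symm⟩
      · rintro ⟨a, ⟨haB, haA, haC⟩, rfl⟩
        exact ⟨rankIn A a, ⟨⟨a, ⟨haB, haA⟩, rfl⟩, haC⟩, rankIn_comp hC haA⟩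
    rw [restrictSC_cons A B L, restrictSC_cons (A.filter fun a => rankIn A a ∈ C) B L]
    by_cases h : ((B ∩ A).image (rankIn A)).Nonempty
    · rw [if_pos h, restrictSC_cons, hhead, ih]
    · rw [if_neg h]
      have hBA : B ∩ A = ∅ := by
        rw [← Finset.not_nonempty_iff_eq_empty]
        intro h'
        exact h (h'.image _)
      have hBA' : B ∩ (A.filter fun a => rankIn A a ∈ C) = ∅ := by
        rw [← Finset.subset_empty, ← hBA]
        exact Finset.inter_subset_inter_left (Finset.filter_subset _ _)
      rw [hBA', ih]
      simp

lemma ground_restrict (A : Finset ℕ) (L : SC) :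
    ground (restrictSC A L) = (ground L ∩ A).image (rankIn A) := by
  induction L with
  | nil => simp [ground, restrictSC]
  | cons B L ih =>
    rw [restrictSC_cons, ground_cons, Finset.union_inter_distrib_right, Finset.image_union, ← ih]
    by_cases h : ((B ∩ A).image (rankIn A)).Nonempty
    · rw [if_pos h, ground_cons]
    · rw [if_neg h]
      have : (B ∩ A).image (rankIn A) = ∅ := by
        rw [← Finset.not_nonempty_iff_eq_empty]; exact h
      rw [this, Finset.empty_union]

lemma sup_Icc_one (k : ℕ) : (Finset.Icc 1 k).sup id = k := by
  cases k with
  | zero => simp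
  | succ k =>
    refine le_antisymm (Finset.sup_le fun x hx => (Finset.mem_Icc.mp hx).2) ?_
    exact Finset.le_sup (f := id) (Finset.mem_Icc.mpr ⟨Nat.succ_le_succ (Nat.zero_le k), le_refl _⟩)

lemma maxG_restrict {n : ℕ} {L : SC} (hg : ground L = Finset.Icc 1 n) {A : Finset ℕ}
    (hA : A ⊆ Finset.Icc 1 n) : maxG (restrictSC A L) = A.card := by
  unfold maxG
  rw [ground_restrict, hg, Finset.inter_eq_right.mpr hA, image_rankIn, sup_Icc_one]

lemma rankIn_Icc {n x : ℕ} (hx : x ∈ Finset.Icc 1 n) : rankIn (Finset.Icc 1 n) x = x := by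
  rw [Finset.mem_Icc] at hx
  unfold rankIn
  have : (Finset.Icc 1 n).filter (· ≤ x) = Finset.Icc 1 x := by
    ext a
    simp only [Finset.mem_filter, Finset.mem_Icc]
    omega
  rw [this, Nat.card_Icc]
  omega

lemma restrict_full {n : ℕ} {L : SC} (hne : ∀ B ∈ L, B.Nonempty)
    (hsub : ∀ B ∈ L, B ⊆ Finset.Icc 1 n) : restrictSC (Finset.Icc 1 n) L = L := by
  induction L with
  | nil => rfl
  | cons B L ih =>
    rw [restrictSC_cons]
    have hBA : B ∩ Finset.Icc 1 n = B := Finset.inter_eq_left.mpr (hsub B (by simp))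
    have himg : (B ∩ Finset.Icc 1 n).image (rankIn (Finset.Icc 1 n)) = B := by
      rw [hBA]
      ext y
      simp only [Finset.mem_image]
      constructor
      · rintro ⟨x, hx, rfl⟩
        rw [rankIn_Icc (hsub B (by simp) hx)]
        exact hx
      · intro hy
        exact ⟨y, hy, rankIn_Icc (hsub B (by simp) hy)⟩
    rw [himg, if_pos (hne B (by simp))]
    rw [ih (fun B h => hne _ (List.mem_cons_of_mem _ h)) (fun B h => hsub _ (List.mem_cons_of_mem _ h))]

lemma restrict_self {n : ℕ} {L : SC} (h : IsSetComp n L) : restrictSC (Finset.Icc 1 n) L = L :=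
  restrict_full h.1 (fun B hB => h.2.2 ▸ subset_ground hB)

lemma restrictSC_eq_nil {A : Finset ℕ} {L : SC} :
    restrictSC A L = [] ↔ ∀ B ∈ L, B ∩ A = ∅ := by
  simp [restrictSC, List.filter_eq_nil_iff, Finset.not_nonempty_iff_eq_empty,
    Finset.image_eq_empty]

lemma restrictSC_empty (L : SC) : restrictSC ∅ L = [] := by
  rw [restrictSC_eq_nil]
  intro B _
  exact Finset.inter_empty B

lemma isSetComp_restrict {n : ℕ} {L : SC} (h : IsSetComp n L) {A : Finset ℕ}
    (hA : A ⊆ Finset.Icc 1 n) : IsSetComp A.card (restrictSC A L) := by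
  obtain ⟨hne, hdisj, hg⟩ := h
  refine ⟨?_, ?_, ?_⟩
  · intro B hB
    have := List.of_mem_filter hB
    simpa using this
  · unfold restrictSC
    apply List.Pairwise.filter
    rw [List.pairwise_map]
    refine hdisj.imp ?_
    intro B1 B2 hd
    rw [Finset.disjoint_left]
    rintro y h1 h2
    rcases Finset.mem_image.mp h1 with ⟨a, haB, rfl⟩
    rcases Finset.mem_image.mp h2 with ⟨b, hbB, hab⟩
    rw [Finset.mem_inter] at haB hbB
    have : b = a := rankIn_injOn hbB.2 haB.2 hab
    subst this
    exact Finset.disjoint_left.mp hd haB.1 hbB.1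
  · rw [ground_restrict, hg, Finset.inter_eq_right.mpr hA, image_rankIn]

lemma maxG_eq {n : ℕ} {P : SC} (h : IsSetComp n P) : maxG P = n := by
  unfold maxG
  rw [h.2.2, sup_Icc_one]

lemma filter_rank_sdiff (A C : Finset ℕ) :
    (A.filter fun a => rankIn A a ∈ Finset.Icc 1 A.card \ C)
      = A \ (A.filter fun a => rankIn A a ∈ C) := by
  ext x
  simp only [Finset.mem_filter, Finset.mem_sdiff, Finset.mem_Icc]
  constructor
  · rintro ⟨hx, _, hnc⟩
    exact ⟨hx, fun h => hnc h.2⟩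
  · rintro ⟨hx, h⟩
    exact ⟨hx, ⟨rankIn_pos hx, rankIn_le_card A x⟩, fun hc => h ⟨hx, hc⟩⟩

lemma sum_powerset_rank {M : Type*} [AddCommMonoid M] (A : Finset ℕ) (F : Finset ℕ → M) :
    ∑ C ∈ (Finset.Icc 1 A.card).powerset, F (A.filter fun a => rankIn A a ∈ C)
      = ∑ U ∈ A.powerset, F U := by
  apply Finset.sum_nbij' (i := fun C => A.filter fun a => rankIn A a ∈ C)
      (j := fun U => U.image (rankIn A))
  · intro C _
    exact Finset.mem_powerset.mpr (Finset.filter_subset _ _)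
  · intro U hU
    rw [Finset.mem_powerset] at *
    calc U.image (rankIn A) ⊆ A.image (rankIn A) := Finset.image_subset_image hU
    _ = Finset.Icc 1 A.card := image_rankIn A
  · intro C hC
    rw [Finset.mem_powerset] at hC
    ext c
    simp only [Finset.mem_image, Finset.mem_filter]
    constructor
    · rintro ⟨a, ⟨haA, haC⟩, rfl⟩
      exact haC
    · intro hcC
      have : c ∈ A.image (rankIn A) := by rw [image_rankIn]; exact hC hcC
      rcases Finset.mem_image.mp this with ⟨a, haA, rfl⟩
      exact ⟨a, ⟨haA, hcC⟩, rfl⟩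
  · intro U hU
    rw [Finset.mem_powerset] at hU
    ext x
    simp only [Finset.mem_filter, Finset.mem_image]
    constructor
    · rintro ⟨hxA, a, haU, ha⟩
      rwa [rankIn_injOn hxA (hU haU) ha.symm]
    · intro hxU
      exact ⟨hU hxU, x, hxU, rfl⟩
  · intro C _
    rfl

lemma sum_coassoc {M : Type*} [AddCommMonoid M] (N : Finset ℕ)
    (f : Finset ℕ → Finset ℕ → Finset ℕ → M) :
    ∑ A ∈ N.powerset, ∑ U ∈ A.powerset, f U (A \ U) (N \ A)
      = ∑ A ∈ N.powerset, ∑ U ∈ (N \ A).powerset, f A U ((N \ A) \ U) := by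
  have h1 := Finset.sum_sigma N.powerset (fun A => A.powerset)
    (fun p => f p.2 (p.1 \ p.2) (N \ p.1))
  have h2 := Finset.sum_sigma N.powerset (fun A => (N \ A).powerset)
    (fun p => f p.1 p.2 ((N \ p.1) \ p.2))
  rw [← h1, ← h2]
  apply Finset.sum_nbij'
    (i := fun p => Sigma.mk (β := fun _ : Finset ℕ => Finset ℕ) p.2 (p.1 \ p.2))
    (j := fun p => Sigma.mk (β := fun _ : Finset ℕ => Finset ℕ) (p.1 ∪ p.2) p.1)
  · rintro ⟨A, U⟩ hp
    rw [Finset.mem_sigma, Finset.mem_powerset, Finset.mem_powerset] at hp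
    rw [Finset.mem_sigma, Finset.mem_powerset, Finset.mem_powerset]
    refine ⟨hp.2.trans hp.1, ?_⟩
    intro x hx
    rw [Finset.mem_sdiff] at *
    exact ⟨hp.1 hx.1, hx.2⟩
  · rintro ⟨A, U⟩ hp
    rw [Finset.mem_sigma, Finset.mem_powerset, Finset.mem_powerset] at hp
    rw [Finset.mem_sigma, Finset.mem_powerset, Finset.mem_powerset]
    constructor
    · apply Finset.union_subset hp.1
      exact hp.2.trans (Finset.sdiff_subset)
    · exact Finset.subset_union_left
  · rintro ⟨A, U⟩ hp
    rw [Finset.mem_sigma, Finset.mem_powerset, Finset.mem_powerset] at hp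
    show Sigma.mk (β := fun _ : Finset ℕ => Finset ℕ) (U ∪ A \ U) U = ⟨A, U⟩
    rw [Finset.union_sdiff_of_subset hp.2]
  · rintro ⟨A, U⟩ hp
    rw [Finset.mem_sigma, Finset.mem_powerset, Finset.mem_powerset] at hp
    have : (A ∪ U) \ A = U := by
      apply Finset.union_sdiff_cancel_left
      rw [Finset.disjoint_left]
      intro x hxA hxU
      exact (Finset.mem_sdiff.mp (hp.2 hxU)).2 hxA
    show Sigma.mk (β := fun _ : Finset ℕ => Finset ℕ) A ((A ∪ U) \ A) = ⟨A, U⟩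
    rw [this]
  · rintro ⟨A, U⟩ hp
    rw [Finset.mem_sigma, Finset.mem_powerset, Finset.mem_powerset] at hp
    have : N \ A = (N \ U) \ (A \ U) := by
      ext x
      have hUA := hp.2
      simp only [Finset.mem_sdiff]
      constructor
      · rintro ⟨hxN, hxA⟩
        exact ⟨⟨hxN, fun h => hxA (hUA h)⟩, fun h => hxA h.1⟩
      · rintro ⟨⟨hxN, hxU⟩, hxAU⟩
        refine ⟨hxN, fun hxA => hxAU ⟨hxA, hxU⟩⟩
    rw [this]

lemma dHatL_single (P : SC) : dHatL R (Finsupp.single P 1) =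
    ∑ A ∈ (Finset.Icc 1 (maxG P)).powerset,
      Finsupp.single (restrictSC A P, restrictSC ((Finset.Icc 1 (maxG P)) \ A) P) 1 := by
  rw [dHatL, Finsupp.lift_apply, Finsupp.sum_single_index, one_smul]
  simp

lemma applyFst_single (d : FM R →ₗ[R] FM2 R) (P1 P2 : SC) :
    applyFst R d (Finsupp.single (P1, P2) 1) =
      Finsupp.mapDomain (fun RS : SC × SC => (RS.1, RS.2, P2)) (d (Finsupp.single P1 1)) := by
  rw [applyFst, Finsupp.lift_apply, Finsupp.sum_single_index, one_smul]
  simp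

lemma applySnd_single (d : FM R →ₗ[R] FM2 R) (P1 P2 : SC) :
    applySnd R d (Finsupp.single (P1, P2) 1) =
      Finsupp.mapDomain (fun RS : SC × SC => (P1, RS.1, RS.2)) (d (Finsupp.single P2 1)) := by
  rw [applySnd, Finsupp.lift_apply, Finsupp.sum_single_index, one_smul]
  simp

lemma twistL_single (P1 P2 : SC) :
    twistL R (Finsupp.single (P1, P2) 1) = Finsupp.single (P2, P1) 1 := by
  rw [twistL, Finsupp.lift_apply, Finsupp.sum_single_index, one_smul]
  simp

lemma epsFst_single (P1 P2 : SC) :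
    epsFst R (Finsupp.single (P1, P2) 1) =
      if P1 = ([] : SC) then Finsupp.single P2 1 else 0 := by
  rw [epsFst, Finsupp.lift_apply, Finsupp.sum_single_index, one_smul]
  simp

lemma epsSnd_single (P1 P2 : SC) :
    epsSnd R (Finsupp.single (P1, P2) 1) =
      if P2 = ([] : SC) then Finsupp.single P1 1 else 0 := by
  rw [epsSnd, Finsupp.lift_apply, Finsupp.sum_single_index, one_smul]
  simp

lemma part1 (n : ℕ) (P : SC) (hP : IsSetComp n P) :
    applyFst R (dHatL R) (dHatL R (Finsupp.single P 1)) =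
      applySnd R (dHatL R) (dHatL R (Finsupp.single P 1)) := by
  have hg := hP.2.2
  rw [dHatL_single, maxG_eq hP, map_sum, map_sum]
  have L : ∀ A ∈ (Finset.Icc 1 n).powerset,
      applyFst R (dHatL R)
          (Finsupp.single (restrictSC A P, restrictSC (Finset.Icc 1 n \ A) P) 1)
        = ∑ U ∈ A.powerset, Finsupp.single (restrictSC U P, restrictSC (A \ U) P,
            restrictSC (Finset.Icc 1 n \ A) P) 1 := by
    intro A hA
    rw [Finset.mem_powerset] at hA
    rw [applyFst_single, dHatL_single, maxG_restrict hg hA, Finsupp.mapDomain_finset_sum]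
    rw [← sum_powerset_rank A (fun U => Finsupp.single (restrictSC U P,
      restrictSC (A \ U) P, restrictSC (Finset.Icc 1 n \ A) P) 1)]
    apply Finset.sum_congr rfl
    intro C hC
    rw [Finset.mem_powerset] at hC
    rw [Finsupp.mapDomain_single, restrictSC_restrictSC hC,
      restrictSC_restrictSC Finset.sdiff_subset, filter_rank_sdiff]
  have Rside : ∀ A ∈ (Finset.Icc 1 n).powerset,
      applySnd R (dHatL R)
          (Finsupp.single (restrictSC A P, restrictSC (Finset.Icc 1 n \ A) P) 1)
        = ∑ U ∈ (Finset.Icc 1 n \ A).powerset,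
            Finsupp.single (restrictSC A P, restrictSC U P,
              restrictSC ((Finset.Icc 1 n \ A) \ U) P) 1 := by
    intro A hA
    rw [Finset.mem_powerset] at hA
    rw [applySnd_single, dHatL_single, maxG_restrict hg Finset.sdiff_subset,
      Finsupp.mapDomain_finset_sum]
    rw [← sum_powerset_rank (Finset.Icc 1 n \ A) (fun U => Finsupp.single (restrictSC A P,
      restrictSC U P, restrictSC ((Finset.Icc 1 n \ A) \ U) P) 1)]
    apply Finset.sum_congr rfl
    intro C hC
    rw [Finset.mem_powerset] at hC
    rw [Finsupp.mapDomain_single, restrictSC_restrictSC hC,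
      restrictSC_restrictSC Finset.sdiff_subset, filter_rank_sdiff]
  rw [Finset.sum_congr rfl L, Finset.sum_congr rfl Rside]
  exact sum_coassoc (Finset.Icc 1 n)
    (fun U V W => Finsupp.single (restrictSC U P, restrictSC V P, restrictSC W P) 1)

lemma part2 (n : ℕ) (P : SC) (hP : IsSetComp n P) :
    twistL R (dHatL R (Finsupp.single P 1)) = dHatL R (Finsupp.single P 1) := by
  rw [dHatL_single, maxG_eq hP, map_sum]
  rw [Finset.sum_congr rfl (fun A _ => twistL_single R _ _)]
  apply Finset.sum_nbij' (i := fun A => Finset.Icc 1 n \ A) (j := fun A => Finset.Icc 1 n \ A)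
  · intro A _
    exact Finset.mem_powerset.mpr Finset.sdiff_subset
  · intro A _
    exact Finset.mem_powerset.mpr Finset.sdiff_subset
  · intro A hA
    rw [Finset.mem_powerset] at hA
    rw [Finset.sdiff_sdiff_self_left, Finset.inter_eq_right.mpr hA]
  · intro A hA
    rw [Finset.mem_powerset] at hA
    rw [Finset.sdiff_sdiff_self_left, Finset.inter_eq_right.mpr hA]
  · intro A hA
    rw [Finset.mem_powerset] at hA
    rw [Finset.sdiff_sdiff_self_left, Finset.inter_eq_right.mpr hA]

lemma restrict_ne_nil {n : ℕ} {P : SC} (hP : IsSetComp n P) {A : Finset ℕ}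
    (hA : A ⊆ Finset.Icc 1 n) (hne : A.Nonempty) : restrictSC A P ≠ [] := by
  intro h
  obtain ⟨a, ha⟩ := hne
  have haN : a ∈ ground P := by rw [hP.2.2]; exact hA ha
  obtain ⟨B, hB, haB⟩ := mem_ground.mp haN
  have h2 := restrictSC_eq_nil.mp h B hB
  have h3 : a ∈ B ∩ A := Finset.mem_inter.mpr ⟨haB, ha⟩
  rw [h2] at h3
  exact absurd h3 (Finset.notMem_empty a)

lemma part3a (n : ℕ) (P : SC) (hP : IsSetComp n P) :
    epsFst R (dHatL R (Finsupp.single P 1)) = Finsupp.single P 1 := by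
  rw [dHatL_single, maxG_eq hP, map_sum]
  rw [Finset.sum_congr rfl (fun A _ => epsFst_single R _ _)]
  rw [Finset.sum_eq_single_of_mem ∅ (Finset.empty_mem_powerset _)]
  · rw [if_pos (restrictSC_empty P), Finset.sdiff_empty, restrict_self hP]
  · intro A hA hne
    rw [Finset.mem_powerset] at hA
    rw [if_neg (restrict_ne_nil hP hA (Finset.nonempty_iff_ne_empty.mpr hne))]

lemma part3b (n : ℕ) (P : SC) (hP : IsSetComp n P) :
    epsSnd R (dHatL R (Finsupp.single P 1)) = Finsupp.single P 1 := by
  rw [dHatL_single, maxG_eq hP, map_sum]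
  rw [Finset.sum_congr rfl (fun A _ => epsSnd_single R _ _)]
  rw [Finset.sum_eq_single_of_mem (Finset.Icc 1 n) (Finset.mem_powerset_self _)]
  · rw [Finset.sdiff_self, if_pos (restrictSC_empty P), restrict_self hP]
  · intro A hA hne
    rw [Finset.mem_powerset] at hA
    have : (Finset.Icc 1 n \ A).Nonempty := by
      rw [Finset.sdiff_nonempty]
      intro h
      exact hne (Finset.Subset.antisymm hA h)
    rw [if_neg (restrict_ne_nil hP Finset.sdiff_subset this)]

lemma part4 (n : ℕ) (P : SC) (hP : IsSetComp n P) :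
    dHatL R (Finsupp.single P 1) ∈ Submodule.span R
      {f : FM2 R | ∃ p q Q R', p + q = n ∧ IsSetComp p Q ∧ IsSetComp q R' ∧
        f = Finsupp.single (Q, R') 1} := by
  rw [dHatL_single, maxG_eq hP]
  apply Submodule.sum_mem
  intro A hA
  rw [Finset.mem_powerset] at hA
  apply Submodule.subset_span
  refine ⟨A.card, (Finset.Icc 1 n \ A).card, restrictSC A P,
    restrictSC (Finset.Icc 1 n \ A) P, ?_, isSetComp_restrict hP hA,
    isSetComp_restrict hP Finset.sdiff_subset, rfl⟩
  have h1 : A.card ≤ n := by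
    have := Finset.card_le_card hA
    simpa [Nat.card_Icc] using this
  rw [Finset.card_sdiff_of_subset hA, Nat.card_Icc]
  omega

/-- **Theorem.** `(T_•, δ̂)` is a graded coassociative cocommutative counital
coalgebra: `(δ̂ ⊗ id) ∘ δ̂ = (id ⊗ δ̂) ∘ δ̂`, composing `δ̂` with the twist map
gives back `δ̂`, the projection onto `T_0 ≅ ℤ` is a counit, and `δ̂` respects
the grading. -/
theorem cosymmetrized_coproduct_coalgebra :
    (∀ (n : ℕ) (P : SC), IsSetComp n P →
        applyFst ℤ (dHatL ℤ) (dHatL ℤ (Finsupp.single P 1)) =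
          applySnd ℤ (dHatL ℤ) (dHatL ℤ (Finsupp.single P 1))) ∧
    (∀ (n : ℕ) (P : SC), IsSetComp n P →
        twistL ℤ (dHatL ℤ (Finsupp.single P 1)) = dHatL ℤ (Finsupp.single P 1)) ∧
    (∀ (n : ℕ) (P : SC), IsSetComp n P →
        epsFst ℤ (dHatL ℤ (Finsupp.single P 1)) = Finsupp.single P 1 ∧
        epsSnd ℤ (dHatL ℤ (Finsupp.single P 1)) = Finsupp.single P 1) ∧
    (∀ (n : ℕ) (P : SC), IsSetComp n P →
        dHatL ℤ (Finsupp.single P 1) ∈ Submodule.span ℤ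
          {f : FM2 ℤ | ∃ p q Q R', p + q = n ∧ IsSetComp p Q ∧ IsSetComp q R' ∧
            f = Finsupp.single (Q, R') 1}) :=
  ⟨fun n P hP => part1 ℤ n P hP, fun n P hP => part2 ℤ n P hP,
    fun n P hP => ⟨part3a ℤ n P hP, part3b ℤ n P hP⟩, fun n P hP => part4 ℤ n P hP⟩
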